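/- Under condition (Hβ^b), for every t ≥ 0 and x ∈ ℝ^d, the mollified flow satisfies ‖φ_t^{(1)}(x) − x‖₂ ≤ κ1·t·(2 + ‖x‖₂^β ∨ ‖x‖₂)·exp(‖‖∇b_1‖₂‖_∞ · t). -/

import Mathlib

noncomputable section
open MeasureTheory Real Set ProbabilityTheory Matrix

namespace OGD

abbrev Vec (d : ℕ) := EuclideanSpace ℝ (Fin d)
abbrev Mat (d : ℕ) := Matrix (Fin d) (Fin d) ℝ

/-- quadratic form `⟨A v, v⟩` -/
def quad {d : ℕ} (A : Mat d) (v : Vec d) : ℝ := ∑ i, ∑ j, A i j * v j * v i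

/-- Frobenius norm -/
def frobNorm {d : ℕ} (A : Mat d) : ℝ := Real.sqrt (∑ i, ∑ j, (A i j) ^ 2)

def matVec {d : ℕ} (A : Mat d) (v : Vec d) : Vec d :=
  (WithLp.equiv 2 (Fin d → ℝ)).symm (A.mulVec (WithLp.equiv 2 (Fin d → ℝ) v))

/-- spectral norm -/
def specNorm {d : ℕ} (A : Mat d) : ℝ :=
  ⨆ v : {v : Vec d // ‖v‖ ≤ 1}, ‖matVec A (v : Vec d)‖

/-- condition `(Hα^a)` -/
def CondHa {d : ℕ} (a : Vec d → Mat d) (k0 α : ℝ) : Prop :=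
  1 ≤ k0 ∧ α ∈ Set.Ioc (0:ℝ) 1 ∧
  ∀ x y ξ : Vec d,
    k0⁻¹ * ‖ξ‖ ^ 2 ≤ quad (a x * (a x)ᵀ) ξ ∧
    quad (a x * (a x)ᵀ) ξ ≤ k0 * ‖ξ‖ ^ 2 ∧
    frobNorm (a x - a y) ≤ k0 * ‖x - y‖ ^ α

/-- condition `(Hβ^b)` -/
def CondHb {d : ℕ} (b : Vec d → Vec d) (k1 β : ℝ) : Prop :=
  0 < k1 ∧ β ∈ Set.Icc (0:ℝ) 1 ∧ Measurable b ∧ ‖b 0‖ ≤ k1 ∧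
  ∀ x y : Vec d, ‖b x - b y‖ ≤ k1 * max (‖x - y‖ ^ β) ‖x - y‖

/-- condition `(Lγ^b)` -/
def CondL {d : ℕ} (b : Vec d → Vec d) (kk1 γ : ℝ) : Prop :=
  0 ≤ γ ∧ 0 < kk1 ∧ ∀ x : Vec d, inner (𝕜 := ℝ) (b x) x ≤ -kk1⁻¹ * ‖x‖ ^ (1 + γ) + kk1

/-- generator of the diffusion -/
def generator {d : ℕ} (a : Vec d → Mat d) (b : Vec d → Vec d)
    (f : Vec d → ℝ) (x : Vec d) : ℝ :=
  inner (𝕜 := ℝ) (b x) (gradient f x) +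
    (1/2) * ∑ i, ∑ j, (a x * (a x)ᵀ) i j *
      fderiv ℝ (fun y => fderiv ℝ f y (EuclideanSpace.single j 1)) x (EuclideanSpace.single i 1)

/-- weak solution of the SDE `dX = b dt + a dw` in the sense of the martingale problem -/
def IsWeakSolution {d : ℕ} {Ω : Type*} {_mΩ : MeasurableSpace Ω} (P : Measure Ω)
    (a : Vec d → Mat d) (b : Vec d → Vec d) (X : ℝ → Ω → Vec d) : Prop :=
  ∃ hX : ∀ t, StronglyMeasurable (X t),
    (∀ t ≤ (0:ℝ), X t = X 0) ∧
    (∀ ω, Continuous fun t => X t ω) ∧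
    ∀ f : Vec d → ℝ, ContDiff ℝ 2 f → HasCompactSupport f →
      Martingale (fun t ω => f (X t ω) - ∫ s in Set.Ioc (0:ℝ) t, generator a b f (X s ω))
        (MeasureTheory.Filtration.natural X hX) P

/-- total variation distance `‖μ - ν‖_TV = μ₊(X) + μ₋(X)` -/
def tvDist {α : Type*} [MeasurableSpace α] (μ ν : Measure α) : ℝ :=
  ⨆ (s : Set α) (_ : MeasurableSet s), 2 * ((μ s).toReal - (ν s).toReal)

/-- squared Hellinger distance -/
def hellingerSq {α : Type*} [MeasurableSpace α] (μ ν : Measure α) : ℝ :=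
  ∫ x, (Real.sqrt ((μ.rnDeriv (μ + ν) x).toReal)
        - Real.sqrt ((ν.rnDeriv (μ + ν) x).toReal)) ^ 2 ∂(μ + ν)

/-- σ-algebra generated by the path up to time `t` -/
def pathSigma {d : ℕ} {Ω : Type*} (X : ℝ → Ω → Vec d) (t : ℝ) : MeasurableSpace Ω :=
  ⨆ (s : ℝ) (_ : s ≤ t), MeasurableSpace.comap (X s) inferInstance

/-- invariance of a probability measure for the SDE -/
def IsInvariant {d : ℕ} (a : Vec d → Mat d) (b : Vec d → Vec d) (Pi0 : Measure (Vec d)) : Prop :=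
  ∀ (Ω : Type) (_mΩ : MeasurableSpace Ω) (P : Measure Ω), IsProbabilityMeasure P →
    ∀ X : ℝ → Ω → Vec d, IsWeakSolution P a b X → P.map (X 0) = Pi0 →
    ∀ t : ℝ, 0 ≤ t → P.map (X t) = Pi0

end OGD

open OGD

/-- bound on the mollified deterministic flow -/
theorem mollified_flow_bound (d : ℕ) (b : Vec d → Vec d) (k1 β : ℝ)
    (hb : CondHb b k1 β)
    (ρ : Vec d → ℝ) (hρ_smooth : ContDiff ℝ (⊤ : ℕ∞) ρ)
    (hρ_supp : Function.support ρ ⊆ Metric.closedBall 0 1)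
    (hρ_nonneg : ∀ x, 0 ≤ ρ x) (hρ_int : ∫ x, ρ x = 1)
    (b1 : Vec d → Vec d)
    (hb1 : ∀ x, b1 x = ∫ y, ρ (x - y) • b y)
    (hb1_diff : Differentiable ℝ b1)
    (hBdd : BddAbove (Set.range fun x => ‖fderiv ℝ b1 x‖))
    (φ : ℝ → Vec d → Vec d)
    (hφ0 : ∀ x, φ 0 x = x)
    (hφ : ∀ (x : Vec d) (t : ℝ), HasDerivAt (fun s => φ s x) (b1 (φ t x)) t)
    (t : ℝ) (ht : 0 ≤ t) (x : Vec d) :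
    ‖φ t x - x‖ ≤ k1 * t * (2 + max (‖x‖ ^ β) ‖x‖) *
      Real.exp ((⨆ x' : Vec d, ‖fderiv ℝ b1 x'‖) * t) := by

  obtain ⟨hk1, ⟨hβ0, hβ1⟩, hbm, hb0, hbL⟩ := hb
  set K : ℝ := ⨆ x' : Vec d, ‖fderiv ℝ b1 x'‖ with hK
  set C : ℝ := k1 * (2 + max (‖x‖ ^ β) ‖x‖) with hC
  have hmax0 : (0:ℝ) ≤ max (‖x‖ ^ β) ‖x‖ :=
    le_trans (Real.rpow_nonneg (norm_nonneg x) β) (le_max_left _ _)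
  have hC0 : 0 ≤ C := mul_nonneg hk1.le (by linarith)
  -- K bounds all fderiv norms, K ≥ 0
  have hKle : ∀ y : Vec d, ‖fderiv ℝ b1 y‖ ≤ K := fun y => le_ciSup hBdd y
  have hK0 : 0 ≤ K := le_trans (norm_nonneg _) (hKle 0)
  -- b1 is K-Lipschitz
  have hlip : ∀ u v : Vec d, ‖b1 u - b1 v‖ ≤ K * ‖u - v‖ := by
    intro u v
    exact Convex.norm_image_sub_le_of_norm_fderiv_le (fun y _ => hb1_diff y)
      (fun y _ => hKle y) convex_univ (Set.mem_univ v) (Set.mem_univ u)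
  -- pointwise bound on b near x
  have hbnd : ∀ y : Vec d, ‖x - y‖ ≤ 1 → ‖b y‖ ≤ C := by
    intro y hy
    have h1 : ‖b y‖ ≤ k1 + k1 * max (‖y‖ ^ β) ‖y‖ := by
      have := hbL y 0
      simp only [sub_zero] at this
      calc ‖b y‖ = ‖b 0 + (b y - b 0)‖ := by rw [show b 0 + (b y - b 0) = b y from by abel]
        _ ≤ ‖b 0‖ + ‖b y - b 0‖ := norm_add_le _ _
        _ ≤ k1 + k1 * max (‖y‖ ^ β) ‖y‖ := add_le_add hb0 this
    have hyx : ‖y‖ ≤ ‖x‖ + 1 := by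
      calc ‖y‖ = ‖x - (x - y)‖ := by rw [sub_sub_cancel]
        _ ≤ ‖x‖ + ‖x - y‖ := norm_sub_le _ _
        _ ≤ ‖x‖ + 1 := by linarith
    have hsub : (‖x‖ + 1) ^ β ≤ ‖x‖ ^ β + 1 := by
      have := NNReal.rpow_add_le_add_rpow ‖x‖₊ 1 hβ0 hβ1
      have h2 : ((‖x‖₊ + 1 : NNReal) : ℝ) ^ β ≤ ((‖x‖₊ ^ β + 1 ^ β : NNReal) : ℝ) := by
        rw [← NNReal.coe_rpow]
        exact_mod_cast this
      simpa [NNReal.coe_rpow, Real.one_rpow, NNReal.one_rpow] using h2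
    have hmono : max (‖y‖ ^ β) ‖y‖ ≤ max (‖x‖ ^ β) ‖x‖ + 1 := by
      apply max_le
      · calc ‖y‖ ^ β ≤ (‖x‖ + 1) ^ β :=
              Real.rpow_le_rpow (norm_nonneg y) hyx hβ0
          _ ≤ ‖x‖ ^ β + 1 := hsub
          _ ≤ max (‖x‖ ^ β) ‖x‖ + 1 := by
              have := le_max_left (‖x‖ ^ β) ‖x‖; linarith
      · have := le_max_right (‖x‖ ^ β) ‖x‖; linarith
    calc ‖b y‖ ≤ k1 + k1 * max (‖y‖ ^ β) ‖y‖ := h1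
      _ ≤ k1 + k1 * (max (‖x‖ ^ β) ‖x‖ + 1) := by nlinarith
      _ = C := by rw [hC]; ring
  -- ‖b1 x‖ ≤ C
  have hb1bnd : ‖b1 x‖ ≤ C := by
    rw [hb1 x]
    have hcont : Continuous fun y : Vec d => C * ρ (x - y) :=
      continuous_const.mul (hρ_smooth.continuous.comp (continuous_const.sub continuous_id))
    have hcs : HasCompactSupport fun y : Vec d => C * ρ (x - y) := by
      apply HasCompactSupport.intro (isCompact_closedBall x 1)
      intro y hy
      have : ρ (x - y) = 0 := by
        by_contra h
        have : x - y ∈ Metric.closedBall (0 : Vec d) 1 := hρ_supp h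
        simp only [Metric.mem_closedBall, dist_zero_right] at this
        exact hy (by simpa [Metric.mem_closedBall, dist_eq_norm, norm_sub_rev] using this)
      simp [this]
    have hint : MeasureTheory.Integrable fun y : Vec d => C * ρ (x - y) :=
      hcont.integrable_of_hasCompactSupport hcs
    have hle : ‖∫ y, ρ (x - y) • b y‖ ≤ ∫ y, C * ρ (x - y) := by
      apply norm_integral_le_of_norm_le hint
      filter_upwards with y
      rw [norm_smul, Real.norm_eq_abs, abs_of_nonneg (hρ_nonneg _)]
      by_cases h : ρ (x - y) = 0
      · simp [h]
      · have hxy : ‖x - y‖ ≤ 1 := by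
          have : x - y ∈ Metric.closedBall (0 : Vec d) 1 := hρ_supp h
          simpa [Metric.mem_closedBall, dist_zero_right] using this
        rw [mul_comm C _]
        exact mul_le_mul_of_nonneg_left (hbnd y hxy) (hρ_nonneg _)
    have hval : ∫ y, C * ρ (x - y) = C := by
      rw [MeasureTheory.integral_const_mul]
      rw [MeasureTheory.integral_sub_left_eq_self (fun y => ρ y) volume x, hρ_int, mul_one]
    rw [hval] at hle
    exact hle
  -- Grönwall
  have hgron : ‖φ t x - x‖ ≤ gronwallBound 0 K ‖b1 x‖ (t - 0) := by
    apply norm_le_gronwallBound_of_norm_deriv_right_le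
      (f := fun s => φ s x - x) (f' := fun s => b1 (φ s x)) (a := 0) (b := t)
    · intro s _
      exact (((hφ x s).sub_const x).continuousAt).continuousWithinAt
    · intro s _
      exact ((hφ x s).sub_const x).hasDerivWithinAt
    · simp [hφ0]
    · intro s _
      calc ‖b1 (φ s x)‖ = ‖(b1 (φ s x) - b1 x) + b1 x‖ := by rw [sub_add_cancel]
        _ ≤ ‖b1 (φ s x) - b1 x‖ + ‖b1 x‖ := norm_add_le _ _
        _ ≤ K * ‖φ s x - x‖ + ‖b1 x‖ :=
            add_le_add (hlip _ _) le_rfl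
    · exact ⟨ht, le_refl t⟩
  rw [sub_zero] at hgron
  -- bound gronwallBound 0 K ε t ≤ ε * t * exp (K t)
  have hgb : gronwallBound 0 K ‖b1 x‖ t ≤ ‖b1 x‖ * t * Real.exp (K * t) := by
    by_cases hKz : K = 0
    · rw [hKz, gronwallBound_K0]
      simp only [zero_add, zero_mul, Real.exp_zero, mul_one, le_refl]
    · rw [gronwallBound_of_K_ne_0 hKz]
      have hKpos : 0 < K := lt_of_le_of_ne hK0 (Ne.symm hKz)
      have hexp : Real.exp (K * t) - 1 ≤ K * t * Real.exp (K * t) := by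
        have h1 := Real.add_one_le_exp (-(K * t))
        rw [Real.exp_neg] at h1
        nlinarith [Real.exp_pos (K * t), mul_inv_cancel₀ (Real.exp_ne_zero (K * t))]
      have : ‖b1 x‖ / K * (Real.exp (K * t) - 1) ≤
          ‖b1 x‖ / K * (K * t * Real.exp (K * t)) :=
        mul_le_mul_of_nonneg_left hexp (div_nonneg (norm_nonneg _) hK0)
      calc 0 * Real.exp (K * t) + ‖b1 x‖ / K * (Real.exp (K * t) - 1)
          ≤ ‖b1 x‖ / K * (K * t * Real.exp (K * t)) := by linarith
        _ = ‖b1 x‖ * t * Real.exp (K * t) := by field_simp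
  have hfin : ‖b1 x‖ * t * Real.exp (K * t) ≤ C * t * Real.exp (K * t) := by
    apply mul_le_mul_of_nonneg_right _ (Real.exp_pos _).le
    exact mul_le_mul_of_nonneg_right hb1bnd ht
  calc ‖φ t x - x‖ ≤ gronwallBound 0 K ‖b1 x‖ t := hgron
    _ ≤ ‖b1 x‖ * t * Real.exp (K * t) := hgb
    _ ≤ C * t * Real.exp (K * t) := hfin
    _ = k1 * t * (2 + max (‖x‖ ^ β) ‖x‖) * Real.exp (K * t) := by rw [hC]; ring
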